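/- Let G be a k-reciprocal transmission regular connected graph on n ≥ 2 vertices and α ∈ [0,1]. Then RD_α(G) is positive semidefinite if and only if α ≥ α₀ = −λ_min(RD(G)) / (k − λ_min(RD(G))), where λ_min(RD(G)) denotes the smallest eigenvalue of the reciprocal distance matrix RD(G). -/

import Mathlib

open Matrix BigOperators Finset

/-- The reciprocal distance (Harary) matrix of a graph. -/
noncomputable def RDmat {V : Type*} [Fintype V] [DecidableEq V] (G : SimpleGraph V) :
    Matrix V V ℝ :=
  Matrix.of fun i j => if i = j then 0 else (1 : ℝ) / (G.dist i j)

/-- The reciprocal transmission of a vertex. -/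
noncomputable def RTr {V : Type*} [Fintype V] [DecidableEq V] (G : SimpleGraph V) (v : V) : ℝ :=
  ∑ u ∈ Finset.univ.erase v, (1 : ℝ) / (G.dist u v)

/-- The generalized reciprocal distance matrix `RD_α(G) = α RT(G) + (1-α) RD(G)`. -/
noncomputable def RDalpha {V : Type*} [Fintype V] [DecidableEq V] (G : SimpleGraph V) (α : ℝ) :
    Matrix V V ℝ :=
  α • Matrix.diagonal (RTr G) + (1 - α) • RDmat G

/-- The `i`-th largest eigenvalue (1-indexed, with multiplicity) of a real matrix,
obtained from the roots of its characteristic polynomial sorted decreasingly. -/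
noncomputable def eigDesc {V : Type*} [Fintype V] [DecidableEq V] (M : Matrix V V ℝ) (i : ℕ) : ℝ :=
  ((M.charpoly.roots.sort (· ≤ ·)).reverse).getD (i - 1) 0

/-- The spectral radius (largest eigenvalue) of a real symmetric matrix. -/
noncomputable def specRadius {V : Type*} [Fintype V] [DecidableEq V] (M : Matrix V V ℝ) : ℝ :=
  eigDesc M 1

/-- The join of two graphs. -/
def gjoin {V₁ V₂ : Type*} (G₁ : SimpleGraph V₁) (G₂ : SimpleGraph V₂) :
    SimpleGraph (V₁ ⊕ V₂) where
  Adj x y := match x, y with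
    | Sum.inl a, Sum.inl b => G₁.Adj a b
    | Sum.inr a, Sum.inr b => G₂.Adj a b
    | Sum.inl _, Sum.inr _ => True
    | Sum.inr _, Sum.inl _ => True
  symm := ⟨by rintro (a|a) (b|b) h <;> first | exact G₁.adj_symm h | exact G₂.adj_symm h | trivial⟩
  loopless := ⟨by rintro (a|a) h <;> first | exact G₁.loopless.irrefl a h | exact G₂.loopless.irrefl a h | exact G₁.irrefl h | exact G₂.irrefl h⟩


/-!
Regularity turns `RT(G)` into `k • 1`, so `RD_α(G) = (α k) • 1 + (1 - α) • RD(G)` is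
diagonalised by the eigenvectors of `RD(G)`, with eigenvalues `α k + (1 - α) λ`. As `1 - α ≥ 0`,
it is positive semidefinite iff `α k + (1 - α) λ_min ≥ 0`. Finally `k ≥ 0` and `λ_min ≤ 0`
(`RD(G)` has zero trace), so this rearranges to `α (k - λ_min) ≥ -λ_min`; in the degenerate case
`k = λ_min = 0` both sides hold, the quotient being `0 / 0 = 0`.
-/

namespace Matrix.IsHermitian

variable {n : Type*} [Fintype n] [DecidableEq n] {A : Matrix n n ℝ}

theorem eigDesc_eq_eigenvalues₀ (hA : A.IsHermitian) (i : Fin (Fintype.card n)) :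
    eigDesc A (i + 1) = hA.eigenvalues₀ i := by
  have hsort : (A.charpoly.roots.sort (· ≤ ·)).reverse = List.ofFn hA.eigenvalues₀ := by
    rw [← hA.sort_roots_charpoly_eq_eigenvalues₀]
    refine List.Perm.eq_of_sortedGE ?_ ?_ ?_
    · exact (List.sortedLE_iff_pairwise.mpr (Multiset.pairwise_sort _ _)).reverse
    · exact List.sortedGE_iff_pairwise.mpr (Multiset.pairwise_sort _ _)
    · rw [← Multiset.coe_eq_coe]
      simp
  simp [eigDesc, hsort]

theorem isLeast_eigDesc_card [Nonempty n] (hA : A.IsHermitian) :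
    IsLeast (Set.range hA.eigenvalues) (eigDesc A (Fintype.card n)) := by
  have hcard : 0 < Fintype.card n := Fintype.card_pos
  let last : Fin (Fintype.card n) := ⟨Fintype.card n - 1, by omega⟩
  have hrange : Set.range hA.eigenvalues = Set.range hA.eigenvalues₀ :=
    (Fintype.equivOfCardEq (Fintype.card_fin _)).symm.surjective.range_comp _
  have hlast : eigDesc A (Fintype.card n) = hA.eigenvalues₀ last := by
    rw [← hA.eigDesc_eq_eigenvalues₀, Nat.sub_add_cancel hcard]
  rw [hrange, hlast]
  refine ⟨Set.mem_range_self last, ?_⟩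
  rintro _ ⟨i, rfl⟩
  exact hA.eigenvalues₀_antitone (Fin.le_def.mpr (Nat.le_sub_one_of_lt i.2))

theorem posSemidef_smul_one_add_smul_iff (hA : A.IsHermitian) (a c : ℝ) :
    (a • 1 + c • A).PosSemidef ↔ ∀ i, 0 ≤ a + c * hA.eigenvalues i := by
  have hconj : a • 1 + c • A = Unitary.conjStarAlgAut ℝ _ hA.eigenvectorUnitary
      (diagonal fun i => a + c * hA.eigenvalues i) := by
    conv_lhs => rw [hA.spectral_theorem]
    rw [← map_one (Unitary.conjStarAlgAut ℝ _ hA.eigenvectorUnitary), ← map_smul, ← map_smul,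
      ← map_add]
    congr 1
    ext i j
    by_cases h : i = j <;> simp [h]
  rw [hconj, Unitary.conjStarAlgAut_apply, Unitary.isUnit_coe.posSemidef_star_right_conjugate_iff,
    posSemidef_diagonal_iff]

theorem posSemidef_smul_one_add_smul_iff_of_isLeast (hA : A.IsHermitian) {a c μ : ℝ}
    (hc : 0 ≤ c) (hμ : IsLeast (Set.range hA.eigenvalues) μ) :
    (a • 1 + c • A).PosSemidef ↔ 0 ≤ a + c * μ := by
  rw [hA.posSemidef_smul_one_add_smul_iff]
  obtain ⟨⟨i, rfl⟩, hle⟩ := hμ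
  refine ⟨fun h => h i, fun h j => h.trans ?_⟩
  gcongr
  exact hle ⟨j, rfl⟩

theorem exists_eigenvalues_nonpos_of_trace_eq_zero [Nonempty n] (hA : A.IsHermitian)
    (htr : A.trace = 0) : ∃ i, hA.eigenvalues i ≤ 0 := by
  obtain ⟨i, -, hi⟩ := Finset.exists_le_of_sum_le (f := hA.eigenvalues) (g := 0)
    Finset.univ_nonempty (by simpa [hA.trace_eq_sum_eigenvalues] using htr.le)
  exact ⟨i, hi⟩

end Matrix.IsHermitian

theorem neg_div_sub_le_iff_le_add {k μ α : ℝ} (hk : 0 ≤ k) (hμ : μ ≤ 0) (hα : 0 ≤ α) :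
    -μ / (k - μ) ≤ α ↔ 0 ≤ α * k + (1 - α) * μ := by
  rcases (sub_nonneg.mpr (hμ.trans hk)).eq_or_lt with h | h
  · obtain ⟨rfl, rfl⟩ : k = 0 ∧ μ = 0 := by constructor <;> linarith
    simpa using hα
  · rw [div_le_iff₀ h]
    constructor <;> intro <;> linarith

section ReciprocalDistance

variable {V : Type*} [Fintype V] [DecidableEq V] (G : SimpleGraph V)

theorem RDmat_isHermitian : (RDmat G).IsHermitian := by
  ext i j
  simp only [RDmat, conjTranspose_apply, of_apply, star_trivial]
  rcases eq_or_ne i j with rfl | h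
  · rfl
  · rw [if_neg h, if_neg (Ne.symm h), SimpleGraph.dist_comm]

theorem trace_RDmat : (RDmat G).trace = 0 := by
  simp [Matrix.trace, RDmat]

theorem RTr_nonneg (v : V) : 0 ≤ RTr G v :=
  Finset.sum_nonneg fun _ _ => by positivity

theorem RDalpha_eq_smul_one_add_smul {k : ℝ} (hreg : ∀ w, RTr G w = k) (α : ℝ) :
    RDalpha G α = (α * k) • 1 + (1 - α) • RDmat G := by
  rw [RDalpha, show RTr G = fun _ => k from funext hreg, ← smul_smul, ← smul_one_eq_diagonal]

end ReciprocalDistance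

theorem stmt12_general {V : Type*} [Fintype V] [DecidableEq V] (G : SimpleGraph V)
    (hn : 2 ≤ Fintype.card V) (k : ℝ) (hreg : ∀ w : V, RTr G w = k)
    (α : ℝ) (hα : α ∈ Set.Icc (0 : ℝ) 1) :
    (RDalpha G α).PosSemidef ↔
      (-(eigDesc (RDmat G) (Fintype.card V))) /
        (k - eigDesc (RDmat G) (Fintype.card V)) ≤ α := by
  have : Nonempty V := Fintype.card_pos_iff.mp (by omega)
  have hk : 0 ≤ k := hreg (Classical.arbitrary V) ▸ RTr_nonneg G _
  have hM := RDmat_isHermitian G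
  have hμ := hM.isLeast_eigDesc_card
  obtain ⟨i, hi⟩ := hM.exists_eigenvalues_nonpos_of_trace_eq_zero (trace_RDmat G)
  rw [RDalpha_eq_smul_one_add_smul G hreg,
    hM.posSemidef_smul_one_add_smul_iff_of_isLeast (sub_nonneg.mpr hα.2) hμ,
    neg_div_sub_le_iff_le_add hk ((hμ.2 ⟨i, rfl⟩).trans hi) hα.1]

/-- Proposition 3.10: for a `k`-reciprocal transmission regular graph, `RD_α(G)` is positive
semidefinite iff `α ≥ -λ_min(RD(G)) / (k - λ_min(RD(G)))`. -/
theorem stmt12 {V : Type*} [Fintype V] [DecidableEq V] (G : SimpleGraph V) (hG : G.Connected)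
    (hn : 2 ≤ Fintype.card V) (k : ℝ) (hreg : ∀ w : V, RTr G w = k)
    (α : ℝ) (hα : α ∈ Set.Icc (0 : ℝ) 1) :
    (RDalpha G α).PosSemidef ↔
      (-(eigDesc (RDmat G) (Fintype.card V))) /
        (k - eigDesc (RDmat G) (Fintype.card V)) ≤ α :=
  stmt12_general G hn k hreg α hα
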